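/- Let G = (ℤ/9ℤ)⁴ with generators y₉, y₁₁, y₁₃, y₁₅, and define the elements z₀ = y₉, z₁ = y₁₁ + 5y₁₃ + 3y₁₅, z₁' = y₁₁ + 5y₁₃ + 7y₁₅, z₂ = 8y₁₁ + 4y₁₅, z₂' = y₁₁ + 3y₁₃ + 3y₁₅, z₃ = 4y₁₁, z₃' = 4y₁₁ + y₁₃ + 3y₁₅, z₄ = 5y₉ + 4y₁₁ + 2y₁₃ + y₁₅, z₄' = 5y₁₁ + 8y₁₅. Then, up to multiplication by a unit of ℤ/3ℤ, there is exactly one nontrivial homomorphism χ: G → ℤ/3ℤ satisfying χ(z₀) = 0 and χ(zᵢ) = ±χ(zᵢ') for i = 1,2,3,4; it is given by χ(y₉) = χ(y₁₃) = χ(y₁₅) = 0 and χ(y₁₁) = 1. -/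
import Mathlib


/-- Generators of `G = (ℤ/9ℤ)⁴`: coordinates are `(y₉, y₁₁, y₁₃, y₁₅)`. -/
def z0 : Fin 4 → ZMod 9 := ![1, 0, 0, 0]
def z1 : Fin 4 → ZMod 9 := ![0, 1, 5, 3]
def z1' : Fin 4 → ZMod 9 := ![0, 1, 5, 7]
def z2 : Fin 4 → ZMod 9 := ![0, 8, 0, 4]
def z2' : Fin 4 → ZMod 9 := ![0, 1, 3, 3]
def z3 : Fin 4 → ZMod 9 := ![0, 4, 0, 0]
def z3' : Fin 4 → ZMod 9 := ![0, 4, 1, 3]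
def z4 : Fin 4 → ZMod 9 := ![5, 4, 2, 1]
def z4' : Fin 4 → ZMod 9 := ![0, 5, 0, 8]

/-- The conditions `χ(z₀) = 0` and `χ(zᵢ) = ±χ(zᵢ')` for `i = 1, 2, 3, 4`. -/
def Cond (χ : (Fin 4 → ZMod 9) →+ ZMod 3) : Prop :=
  χ z0 = 0 ∧
  (χ z1 = χ z1' ∨ χ z1 = -χ z1') ∧
  (χ z2 = χ z2' ∨ χ z2 = -χ z2') ∧
  (χ z3 = χ z3' ∨ χ z3 = -χ z3') ∧
  (χ z4 = χ z4' ∨ χ z4 = -χ z4')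

/-- The homomorphism `χ₀ : (ℤ/9ℤ)⁴ → ℤ/3ℤ` given by `χ₀(y₉) = χ₀(y₁₃) = χ₀(y₁₅) = 0`
and `χ₀(y₁₁) = 1`, i.e. reduction mod 3 of the second coordinate. -/
def chi0 : (Fin 4 → ZMod 9) →+ ZMod 3 :=
  ((ZMod.castHom (by norm_num : (3 : ℕ) ∣ 9) (ZMod 3)).toAddMonoidHom).comp
    (Pi.evalAddMonoidHom (fun _ : Fin 4 => ZMod 9) 1)

lemma expand (χ : (Fin 4 → ZMod 9) →+ ZMod 3) (v : Fin 4 → ZMod 9) :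
    χ v = ((v 0).val : ZMod 3) * χ (Pi.single 0 1) + ((v 1).val : ZMod 3) * χ (Pi.single 1 1)
      + ((v 2).val : ZMod 3) * χ (Pi.single 2 1) + ((v 3).val : ZMod 3) * χ (Pi.single 3 1) := by
  have h : v = ∑ i : Fin 4, Pi.single i (v i) := (Finset.univ_sum_single v).symm
  have hs : ∀ i : Fin 4, Pi.single i (v i) = ((v i).val • Pi.single i (1 : ZMod 9) : Fin 4 → ZMod 9) := by
    intro i
    funext j
    by_cases hj : j = i
    · subst hj
      simp [ZMod.natCast_val, ZMod.cast_id]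
    · simp [Pi.single_eq_of_ne hj]
  conv_lhs => rw [h]
  rw [map_sum, Fin.sum_univ_four, hs 0, hs 1, hs 2, hs 3]
  rw [map_nsmul, map_nsmul, map_nsmul, map_nsmul]
  simp only [nsmul_eq_mul]

lemma key : ∀ a1 a2 a3 : ZMod 3,
    (a1 + 2*a2 = a1 + 2*a2 + a3 ∨ a1 + 2*a2 = -(a1 + 2*a2 + a3)) →
    (2*a1 + a3 = a1 ∨ 2*a1 + a3 = -a1) →
    (a1 = a1 + a2 ∨ a1 = -(a1 + a2)) →
    (a1 + 2*a2 + a3 = 2*a1 + 2*a3 ∨ a1 + 2*a2 + a3 = -(2*a1 + 2*a3)) →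
    (a2 = 0 ∧ a3 = 0) := by decide

lemma chival (χ : (Fin 4 → ZMod 9) →+ ZMod 3) (v : Fin 4 → ZMod 9)
    (h0 : χ (Pi.single 0 1) = 0) (h2 : χ (Pi.single 2 1) = 0) (h3 : χ (Pi.single 3 1) = 0) :
    χ v = ((v 1).val : ZMod 3) * χ (Pi.single 1 1) := by
  rw [expand χ v, h0, h2, h3]; ring

/-- Up to multiplication by a unit of `ℤ/3ℤ`, there is exactly one nontrivial homomorphism
`χ : (ℤ/9ℤ)⁴ → ℤ/3ℤ` satisfying `χ(z₀) = 0` and `χ(zᵢ) = ±χ(zᵢ')` for `i = 1, 2, 3, 4`;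
it is given by `χ(y₉) = χ(y₁₃) = χ(y₁₅) = 0` and `χ(y₁₁) = 1`. -/
theorem stmt4 :
    (chi0 ≠ 0 ∧ Cond chi0 ∧
      chi0 ![1, 0, 0, 0] = 0 ∧ chi0 ![0, 1, 0, 0] = 1 ∧
      chi0 ![0, 0, 1, 0] = 0 ∧ chi0 ![0, 0, 0, 1] = 0) ∧
    ∀ χ : (Fin 4 → ZMod 9) →+ ZMod 3, χ ≠ 0 → Cond χ →
      ∃ u : (ZMod 3)ˣ, ∀ v, χ v = (u : ZMod 3) * chi0 v := by
  constructor
  · refine ⟨?_, by unfold Cond; decide, by decide, by decide, by decide, by decide⟩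
    intro h
    have : chi0 ![0, 1, 0, 0] = 0 := by rw [h]; rfl
    have h1 : chi0 ![0, 1, 0, 0] = 1 := by decide
    rw [h1] at this
    exact one_ne_zero this
  · intro χ hne ⟨h0, h1, h2, h3, h4⟩
    set a0 := χ (Pi.single 0 1) with ha0def
    set a1 := χ (Pi.single 1 1) with ha1def
    set a2 := χ (Pi.single 2 1) with ha2def
    set a3 := χ (Pi.single 3 1) with ha3def
    have ez : ∀ (w : Fin 4 → ZMod 9),
        χ w = ((w 0).val : ZMod 3) * a0 + ((w 1).val : ZMod 3) * a1
          + ((w 2).val : ZMod 3) * a2 + ((w 3).val : ZMod 3) * a3 := fun w => expand χ w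
    have hz0 : a0 = 0 := by
      have := h0
      rw [ez z0, show ((z0 0).val : ZMod 3) = 1 by decide, show ((z0 1).val : ZMod 3) = 0 by decide,
        show ((z0 2).val : ZMod 3) = 0 by decide, show ((z0 3).val : ZMod 3) = 0 by decide] at this
      linear_combination this
    have e1 : χ z1 = a1 + 2*a2 := by
      rw [ez z1, hz0, show ((z1 0).val : ZMod 3) = 0 by decide, show ((z1 1).val : ZMod 3) = 1 by decide,
        show ((z1 2).val : ZMod 3) = 2 by decide, show ((z1 3).val : ZMod 3) = 0 by decide]; ring
    have e1' : χ z1' = a1 + 2*a2 + a3 := by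
      rw [ez z1', hz0, show ((z1' 0).val : ZMod 3) = 0 by decide, show ((z1' 1).val : ZMod 3) = 1 by decide,
        show ((z1' 2).val : ZMod 3) = 2 by decide, show ((z1' 3).val : ZMod 3) = 1 by decide]; ring
    have e2 : χ z2 = 2*a1 + a3 := by
      rw [ez z2, hz0, show ((z2 0).val : ZMod 3) = 0 by decide, show ((z2 1).val : ZMod 3) = 2 by decide,
        show ((z2 2).val : ZMod 3) = 0 by decide, show ((z2 3).val : ZMod 3) = 1 by decide]; ring
    have e2' : χ z2' = a1 := by
      rw [ez z2', hz0, show ((z2' 0).val : ZMod 3) = 0 by decide, show ((z2' 1).val : ZMod 3) = 1 by decide,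
        show ((z2' 2).val : ZMod 3) = 0 by decide, show ((z2' 3).val : ZMod 3) = 0 by decide]; ring
    have e3 : χ z3 = a1 := by
      rw [ez z3, hz0, show ((z3 0).val : ZMod 3) = 0 by decide, show ((z3 1).val : ZMod 3) = 1 by decide,
        show ((z3 2).val : ZMod 3) = 0 by decide, show ((z3 3).val : ZMod 3) = 0 by decide]; ring
    have e3' : χ z3' = a1 + a2 := by
      rw [ez z3', hz0, show ((z3' 0).val : ZMod 3) = 0 by decide, show ((z3' 1).val : ZMod 3) = 1 by decide,
        show ((z3' 2).val : ZMod 3) = 1 by decide, show ((z3' 3).val : ZMod 3) = 0 by decide]; ring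
    have e4 : χ z4 = a1 + 2*a2 + a3 := by
      rw [ez z4, hz0, show ((z4 0).val : ZMod 3) = 2 by decide, show ((z4 1).val : ZMod 3) = 1 by decide,
        show ((z4 2).val : ZMod 3) = 2 by decide, show ((z4 3).val : ZMod 3) = 1 by decide]; ring
    have e4' : χ z4' = 2*a1 + 2*a3 := by
      rw [ez z4', hz0, show ((z4' 0).val : ZMod 3) = 0 by decide, show ((z4' 1).val : ZMod 3) = 2 by decide,
        show ((z4' 2).val : ZMod 3) = 0 by decide, show ((z4' 3).val : ZMod 3) = 2 by decide]; ring
    rw [e1, e1'] at h1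
    rw [e2, e2'] at h2
    rw [e3, e3'] at h3
    rw [e4, e4'] at h4
    obtain ⟨hz2, hz3⟩ := key a1 a2 a3 h1 h2 h3 h4
    have hz1 : a1 ≠ 0 := by
      intro ha1
      apply hne
      apply AddMonoidHom.ext
      intro w
      rw [ez w, hz0, ha1, hz2, hz3]
      simp
    refine ⟨(isUnit_iff_ne_zero.mpr hz1).unit, fun v => ?_⟩
    rw [IsUnit.unit_spec, ez v, hz0, hz2, hz3]
    have : chi0 v = ((v 1).val : ZMod 3) := by
      simp [chi0, ZMod.castHom_apply, ZMod.natCast_val]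
    rw [this]
    ring
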